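/- There exists a constant C > 0 such that for every t > 0 and every r with 0 < r < 2t, the two-dimensional Lebesgue measure of the set {(θ₁, θ₂) ∈ [0, 2π]² : dist(k_{θ₁} · (e^{−t}·i), e^{−t}·i) ≤ r and dist(k_{θ₂} · (e^{−t}·i), e^{−t}·i) ≤ r} is at most C·e^{−2t+r}. -/

import Mathlib

open UpperHalfPlane MeasureTheory

/-- The rotation matrix `[[cos θ, sin θ], [−sin θ, cos θ]]` as an element of `SL(2, ℝ)`. -/
noncomputable def rotSL (θ : ℝ) : Matrix.SpecialLinearGroup (Fin 2) ℝ :=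
  ⟨!![Real.cos θ, Real.sin θ; -Real.sin θ, Real.cos θ], by
    rw [Matrix.det_fin_two_of]
    nlinarith [Real.sin_sq_add_cos_sq θ]⟩

/-- The point `e^{−t}·i` of the hyperbolic upper half-plane. -/
noncomputable def ptI' (t : ℝ) : UpperHalfPlane :=
  ⟨⟨0, Real.exp (-t)⟩, by simpa using Real.exp_pos (-t)⟩

/-!
A rotation `k_θ` moves `z ∈ ℍ` to a point at hyperbolic distance `d` with
`cosh d = 1 + sin² θ · |1 + z²|² / (2 (Im z)²)`; at `z = e^{-t} i` this is `1 + 2 (sin θ · sinh t)²`,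
so `d ≤ r` forces `|sin θ| ≤ sinh (r/2) / sinh t ≤ e^{r/2 - t}`. By Jordan's inequality the angles
in `[0, 2π]` with `|sin θ| ≤ ε` lie within `π ε / 2` of `0`, `π` or `2π`, a set of measure at most
`3π ε`, and the set of pairs lies in the square of that set.
-/

open Real

lemma coe_rotSL_smul (θ : ℝ) (z : ℍ) :
    ((rotSL θ • z : ℍ) : ℂ) = (cos θ * z + sin θ) / (-sin θ * z + cos θ) := by
  rw [coe_specialLinearGroup_apply]
  simp [rotSL]

lemma denom_rotSL (θ : ℝ) (z : ℂ) :
    denom (Matrix.SpecialLinearGroup.mapGL ℝ (rotSL θ)) z = -sin θ * z + cos θ := by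
  change ((rotSL θ : Matrix (Fin 2) (Fin 2) ℝ) 1 0 : ℂ) * z
    + ((rotSL θ : Matrix (Fin 2) (Fin 2) ℝ) 1 1 : ℂ) = _
  simp [rotSL]

lemma im_rotSL_smul (θ : ℝ) (z : ℍ) :
    (rotSL θ • z).im = z.im / ‖(-sin θ * z + cos θ : ℂ)‖ ^ 2 := by
  rw [MulAction.compHom_smul_def, im_smul_eq_div_normSq, denom_rotSL, Complex.normSq_eq_norm_sq]
  simp

lemma neg_sin_mul_add_cos_ne_zero (θ : ℝ) (z : ℍ) : (-sin θ * z + cos θ : ℂ) ≠ 0 :=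
  denom_rotSL θ z ▸ denom_ne_zero _ z

lemma coe_rotSL_smul_sub (θ : ℝ) (z : ℍ) :
    ((rotSL θ • z : ℍ) : ℂ) - z = sin θ * (1 + (z : ℂ) ^ 2) / (-sin θ * z + cos θ) := by
  rw [coe_rotSL_smul, div_sub' (neg_sin_mul_add_cos_ne_zero θ z)]
  ring_nf

lemma cosh_dist_rotSL_smul (θ : ℝ) (z : ℍ) :
    cosh (dist (rotSL θ • z) z) = 1 + sin θ ^ 2 * ‖1 + (z : ℂ) ^ 2‖ ^ 2 / (2 * z.im ^ 2) := by
  have hD := norm_ne_zero_iff.2 (neg_sin_mul_add_cos_ne_zero θ z)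
  rw [cosh_dist, im_rotSL_smul, Complex.dist_eq, coe_rotSL_smul_sub, norm_div, norm_mul,
    Complex.norm_real, Real.norm_eq_abs]
  generalize ‖(-sin θ * z + cos θ : ℂ)‖ = d at hD ⊢
  have := z.im_pos
  field_simp
  rw [sq_abs]; ring

lemma coe_ptI' (t : ℝ) : (ptI' t : ℂ) = exp (-t) * Complex.I :=
  Complex.ext (by simp [ptI', -Complex.ofReal_exp]) (by simp [ptI', -Complex.ofReal_exp])

lemma cosh_dist_rotSL_smul_ptI' (θ t : ℝ) :
    cosh (dist (rotSL θ • ptI' t) (ptI' t)) = 1 + 2 * (sin θ * sinh t) ^ 2 := by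
  have h_one_add_sq : 1 + (ptI' t : ℂ) ^ 2 = ((1 - exp (-t) ^ 2 : ℝ) : ℂ) := by
    rw [coe_ptI']; push_cast; ring_nf; rw [Complex.I_sq]; ring
  rw [cosh_dist_rotSL_smul, h_one_add_sq, Complex.norm_real, Real.norm_eq_abs, sq_abs,
    show (ptI' t).im = exp (-t) from rfl, sinh_eq, exp_neg]
  field_simp

lemma sinh_le_exp_sub_mul_sinh {a b : ℝ} (h : a ≤ b) : sinh a ≤ exp (a - b) * sinh b := by
  calc sinh a = (exp a - exp (-a)) / 2 := sinh_eq a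
    _ ≤ (exp a - exp (a - 2 * b)) / 2 := by gcongr; linarith
    _ = exp (a - b) * sinh b := by
      rw [sinh_eq, mul_div_assoc', mul_sub, ← exp_add, ← exp_add]; ring_nf

lemma abs_sin_mul_sinh_le_of_dist_rotSL_smul_ptI'_le {θ t r : ℝ} (ht : 0 ≤ t)
    (h : dist (rotSL θ • ptI' t) (ptI' t) ≤ r) : |sin θ| * sinh t ≤ sinh (r / 2) := by
  have hr : 0 ≤ r := dist_nonneg.trans h
  have hcosh : cosh (dist (rotSL θ • ptI' t) (ptI' t)) ≤ cosh r := by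
    rwa [cosh_le_cosh, abs_of_nonneg dist_nonneg, abs_of_nonneg hr]
  have hcosh_r : cosh r = 1 + 2 * sinh (r / 2) ^ 2 := by
    rw [← mul_div_cancel₀ r two_ne_zero, cosh_two_mul, cosh_sq]; ring_nf
  rw [cosh_dist_rotSL_smul_ptI', hcosh_r] at hcosh
  have := sq_le_sq.1 (by linarith : (sin θ * sinh t) ^ 2 ≤ sinh (r / 2) ^ 2)
  rwa [abs_mul, abs_of_nonneg (sinh_nonneg_iff.2 ht),
    abs_of_nonneg (sinh_nonneg_iff.2 (by positivity))] at this

lemma abs_sin_le_exp_of_dist_rotSL_smul_ptI'_le {θ t r : ℝ} (ht : 0 < t) (hrt : r ≤ 2 * t)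
    (h : dist (rotSL θ • ptI' t) (ptI' t) ≤ r) : |sin θ| ≤ exp (r / 2 - t) := by
  refine le_of_mul_le_mul_right ?_ (sinh_pos_iff.2 ht)
  calc |sin θ| * sinh t ≤ sinh (r / 2) := abs_sin_mul_sinh_le_of_dist_rotSL_smul_ptI'_le ht.le h
    _ ≤ exp (r / 2 - t) * sinh t := sinh_le_exp_sub_mul_sinh (by linarith)

lemma abs_sub_nat_mul_pi_le_mul_abs_sin {θ : ℝ} (k : ℕ) (h : |θ - k * π| ≤ π / 2) :
    |θ - k * π| ≤ π / 2 * |sin θ| := by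
  have := mul_abs_le_abs_sin h
  rw [sin_sub_nat_mul_pi, abs_mul, abs_pow, abs_neg, abs_one, one_pow, one_mul] at this
  calc |θ - k * π| = π / 2 * (2 / π * |θ - k * π|) := by field_simp
    _ ≤ π / 2 * |sin θ| := by gcongr

lemma exists_abs_sub_nat_mul_pi_le_mul_abs_sin {θ : ℝ} (hθ : θ ∈ Set.Icc 0 (2 * π)) :
    ∃ k ∈ Finset.range 3, |θ - k * π| ≤ π / 2 * |sin θ| := by
  suffices ∃ k ∈ Finset.range 3, |θ - k * π| ≤ π / 2 by
    obtain ⟨k, hk, h⟩ := this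
    exact ⟨k, hk, abs_sub_nat_mul_pi_le_mul_abs_sin k h⟩
  obtain ⟨h₀, h₂⟩ := hθ
  have hπ := pi_pos
  rcases le_or_gt θ (π / 2) with h | h
  · exact ⟨0, by simp, abs_le.2 ⟨by simp; linarith, by simp; linarith⟩⟩
  rcases le_or_gt θ (3 * π / 2) with h' | h'
  · exact ⟨1, by simp, abs_le.2 ⟨by simp; linarith, by simp; linarith⟩⟩
  · exact ⟨2, by simp, abs_le.2 ⟨by push_cast; linarith, by push_cast; linarith⟩⟩

lemma volume_setOf_abs_sin_le_le (ε : ℝ) :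
    volume {θ ∈ Set.Icc 0 (2 * π) | |sin θ| ≤ ε} ≤ ENNReal.ofReal (3 * π * ε) := by
  have hsub : {θ ∈ Set.Icc 0 (2 * π) | |sin θ| ≤ ε} ⊆
      ⋃ k ∈ Finset.range 3, Metric.closedBall (k * π) (π / 2 * ε) := by
    rintro θ ⟨hθ, hε⟩
    obtain ⟨k, hk, hθk⟩ := exists_abs_sub_nat_mul_pi_le_mul_abs_sin hθ
    exact Set.mem_biUnion hk (hθk.trans (by gcongr))
  calc _ ≤ _ := measure_mono hsub
    _ ≤ ∑ k ∈ Finset.range 3, volume (Metric.closedBall (k * π) (π / 2 * ε)) :=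
      measure_biUnion_finset_le _ _
    _ = ENNReal.ofReal (3 * π * ε) := by
      rw [Finset.sum_congr rfl fun k _ ↦ Real.volume_closedBall _ _, Finset.sum_const,
        Finset.card_range, nsmul_eq_mul, ← ENNReal.ofReal_natCast,
        ← ENNReal.ofReal_mul (by positivity)]
      ring_nf

/-- Spherical measure estimate, `SO(2,2)` case: there is a constant `C > 0` such that for all
`t > 0` and `0 < r < 2t`, the two-dimensional Lebesgue measure of the set of pairs of angles
`(θ₁, θ₂) ∈ [0, 2π]²` with `dist (k_{θᵢ} · e^{−t} i, e^{−t} i) ≤ r` for `i = 1, 2`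
is at most `C·e^{−2t+r}`. -/
theorem measure_rot_pair_dist_le :
    ∃ C : ℝ, 0 < C ∧ ∀ t : ℝ, 0 < t → ∀ r : ℝ, 0 < r → r < 2 * t →
    volume {θ : ℝ × ℝ | θ ∈ Set.Icc (0 : ℝ) (2 * Real.pi) ×ˢ Set.Icc (0 : ℝ) (2 * Real.pi) ∧
        dist (rotSL θ.1 • ptI' t) (ptI' t) ≤ r ∧ dist (rotSL θ.2 • ptI' t) (ptI' t) ≤ r}
      ≤ ENNReal.ofReal (C * Real.exp (-(2 * t) + r)) := by
  refine ⟨9 * π ^ 2, by positivity, fun t ht r _ hrt ↦ ?_⟩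
  set S := {θ ∈ Set.Icc 0 (2 * π) | |sin θ| ≤ exp (r / 2 - t)}
  calc _ ≤ volume (S ×ˢ S) := by
        refine measure_mono ?_
        rintro θ ⟨⟨h₁, h₂⟩, hd₁, hd₂⟩
        exact ⟨⟨h₁, abs_sin_le_exp_of_dist_rotSL_smul_ptI'_le ht hrt.le hd₁⟩,
          ⟨h₂, abs_sin_le_exp_of_dist_rotSL_smul_ptI'_le ht hrt.le hd₂⟩⟩
    _ = volume S * volume S := by rw [Measure.volume_eq_prod, Measure.prod_prod]
    _ ≤ ENNReal.ofReal (3 * π * exp (r / 2 - t)) * ENNReal.ofReal (3 * π * exp (r / 2 - t)) :=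
      mul_le_mul' (volume_setOf_abs_sin_le_le _) (volume_setOf_abs_sin_le_le _)
    _ = ENNReal.ofReal (9 * π ^ 2 * exp (-(2 * t) + r)) := by
      rw [← ENNReal.ofReal_mul (by positivity),
        show -(2 * t) + r = (r / 2 - t) + (r / 2 - t) by ring, exp_add]
      ring_nf
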